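/- arXiv:1201.0969 — 3 statements merged into one kernel-verified Lean document; each statement's English description precedes it below -/
import Mathlib

section
/- Define Γ(u,v) := −(u·g⁻¹v + v·g⁻¹u)/2 for symmetric n×n matrices u, v (with g symmetric invertible, all constant). Then for constant symmetric matrices u, v, w, the curvature expression R(u,v)w := D_u(Γ(v,w)) − D_v(Γ(u,w)) + Γ(u, Γ(v,w)) − Γ(v, Γ(u,w)), where D_u denotes the directional derivative of the g-dependent expression Γ in the direction u at the point g, equals −(1/4)·g·[[g⁻¹u, g⁻¹v], g⁻¹w], where [·,·] is the matrix commutator. -/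
/-! With `a = g⁻¹u`, `b = g⁻¹v`, `c = g⁻¹w`, the factor `g` on the right-hand side cancels
against the leading `g⁻¹`, so `g [[a, b], c]` is a sum of words `x g⁻¹ y g⁻¹ z`. Expanding the
Christoffel symbols turns the left-hand side into such words as well, and the identity is a
cancellation in the free algebra on `u, v, w, g⁻¹`. -/

section Curvature

variable {𝕜 R : Type*} [Field 𝕜] [Ring R] [Algebra 𝕜 R]

variable (𝕜) in
def christoffel (gi a b : R) : R :=
  -((1 / 2 : 𝕜) • (a * gi * b + b * gi * a))

theorem christoffel_curvature_eq [CharZero 𝕜] (gi u v w : R) :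
    (1 / 2 : 𝕜) • (v * gi * u * gi * w + w * gi * u * gi * v)
      - (1 / 2 : 𝕜) • (u * gi * v * gi * w + w * gi * v * gi * u)
      + christoffel 𝕜 gi u (christoffel 𝕜 gi v w) - christoffel 𝕜 gi v (christoffel 𝕜 gi u w)
      = -((1 / 4 : 𝕜) • (u * gi * v * gi * w - v * gi * u * gi * w
          - w * gi * u * gi * v + w * gi * v * gi * u)) := by
  simp only [christoffel, smul_add, smul_smul, smul_neg, smul_mul_assoc, mul_smul_comm,
    mul_add, add_mul, mul_neg, neg_mul, ← mul_assoc]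
  module

theorem mul_commutator_commutator_inv_mul {g gi : R} (hg : g * gi = 1) (u v w : R) :
    g * (((gi * u) * (gi * v) - (gi * v) * (gi * u)) * (gi * w)
        - (gi * w) * ((gi * u) * (gi * v) - (gi * v) * (gi * u)))
      = u * gi * v * gi * w - v * gi * u * gi * w - w * gi * u * gi * v
          + w * gi * v * gi * u := by
  simp only [mul_sub, sub_mul, ← mul_assoc, hg, one_mul]
  abel

end Curvature

theorem stmt_9_general {n : ℕ} (g u v w : Matrix (Fin n) (Fin n) ℝ)
    (hginv : IsUnit g.det)
    (Γ : Matrix (Fin n) (Fin n) ℝ → Matrix (Fin n) (Fin n) ℝ → Matrix (Fin n) (Fin n) ℝ)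
    (hΓ : ∀ a b, Γ a b = -((1 / 2 : ℝ) • (a * g⁻¹ * b + b * g⁻¹ * a))) :
    (1 / 2 : ℝ) • (v * g⁻¹ * u * g⁻¹ * w + w * g⁻¹ * u * g⁻¹ * v)
      - (1 / 2 : ℝ) • (u * g⁻¹ * v * g⁻¹ * w + w * g⁻¹ * v * g⁻¹ * u)
      + Γ u (Γ v w) - Γ v (Γ u w)
      = -((1 / 4 : ℝ) • (g *
          (((g⁻¹ * u) * (g⁻¹ * v) - (g⁻¹ * v) * (g⁻¹ * u)) * (g⁻¹ * w)
            - (g⁻¹ * w) * ((g⁻¹ * u) * (g⁻¹ * v) - (g⁻¹ * v) * (g⁻¹ * u))))) := by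
  obtain rfl : Γ = christoffel ℝ g⁻¹ := funext₂ hΓ
  rw [mul_commutator_commutator_inv_mul (Matrix.mul_nonsing_inv g hginv)]
  exact christoffel_curvature_eq g⁻¹ u v w

/-- Pointwise curvature formula for the L² metric on the space of metrics:
with `Γ(u,v) = -(u g⁻¹ v + v g⁻¹ u)/2` and the directional derivatives
`D_u Γ(v,w) = (v g⁻¹ u g⁻¹ w + w g⁻¹ u g⁻¹ v)/2`, one has
`D_uΓ(v,w) − D_vΓ(u,w) + Γ(u,Γ(v,w)) − Γ(v,Γ(u,w)) = -(1/4) g [[g⁻¹u, g⁻¹v], g⁻¹w]`. -/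
theorem stmt_9 {n : ℕ} (g u v w : Matrix (Fin n) (Fin n) ℝ)
    (hginv : IsUnit g.det) (hg : g.IsSymm) (hu : u.IsSymm) (hv : v.IsSymm) (hw : w.IsSymm)
    (Γ : Matrix (Fin n) (Fin n) ℝ → Matrix (Fin n) (Fin n) ℝ → Matrix (Fin n) (Fin n) ℝ)
    (hΓ : ∀ a b, Γ a b = -((1 / 2 : ℝ) • (a * g⁻¹ * b + b * g⁻¹ * a))) :
    (1 / 2 : ℝ) • (v * g⁻¹ * u * g⁻¹ * w + w * g⁻¹ * u * g⁻¹ * v)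
      - (1 / 2 : ℝ) • (u * g⁻¹ * v * g⁻¹ * w + w * g⁻¹ * v * g⁻¹ * u)
      + Γ u (Γ v w) - Γ v (Γ u w)
      = -((1 / 4 : ℝ) • (g *
          (((g⁻¹ * u) * (g⁻¹ * v) - (g⁻¹ * v) * (g⁻¹ * u)) * (g⁻¹ * w)
            - (g⁻¹ * w) * ((g⁻¹ * u) * (g⁻¹ * v) - (g⁻¹ * v) * (g⁻¹ * u))))) :=
  stmt_9_general g u v w hginv Γ hΓ
end

section
/- Let S_t be a continuous family of n×n real matrices and let J_t be a C¹ family of matrices satisfying the ODE 2·J̇_t = J_t S_t − S_t J_t with J₀² = −I. Then J_t² = −I for all t. -/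
/-! `M t := J t * J t` satisfies the linear ODE `2 • M' = M * S - S * M`, by the Leibniz rule and
the equation for `J`. The constant `-1` solves the same ODE, since it commutes with every `S t`, and
agrees with `M` at `t = 0`. Solutions of a linear ODE with continuous coefficients are unique, so
`M = -1`. -/

open Matrix
attribute [local instance] Matrix.normedAddCommGroup Matrix.normedSpace

open Set in
theorem ODE_solution_unique_univ_of_linear {E : Type*} [NormedAddCommGroup E] [NormedSpace ℝ E]
    {A : ℝ → E →L[ℝ] E} (hA : Continuous A) {f g : ℝ → E} {t₀ : ℝ}
    (hf : ∀ t, HasDerivAt f (A t (f t)) t) (hg : ∀ t, HasDerivAt g (A t (g t)) t)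
    (heq : f t₀ = g t₀) : f = g := by
  ext t
  obtain ⟨a, b, ht, ht₀⟩ : ∃ a b, t ∈ Ioo a b ∧ t₀ ∈ Ioo a b :=
    ⟨min (-|t|) (-|t₀|) - 1, max |t| |t₀| + 1, by grind⟩
  -- `A` is bounded on the compact interval, so the vector field is uniformly Lipschitz there.
  obtain ⟨C, hC⟩ := (isCompact_Icc (a := a) (b := b)).exists_bound_of_continuousOn hA.continuousOn
  have hlip : ∀ u ∈ Ioo a b, LipschitzOnWith C.toNNReal (A u) univ := fun u hu =>
    (ContinuousLinearMap.lipschitzWith_of_opNorm_le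
      ((hC u (Ioo_subset_Icc_self hu)).trans (Real.le_coe_toNNReal C))).lipschitzOnWith
  exact ODE_solution_unique_of_mem_Ioo hlip ht₀ (fun u _ => ⟨hf u, mem_univ _⟩)
    (fun u _ => ⟨hg u, mem_univ _⟩) heq ht

theorem HasDerivAt.matrix_mul {𝕜 : Type*} [NontriviallyNormedField 𝕜] {l m n : Type*}
    [Fintype l] [Fintype m] [Fintype n] {A : 𝕜 → Matrix l m 𝕜} {B : 𝕜 → Matrix m n 𝕜}
    {A' : Matrix l m 𝕜} {B' : Matrix m n 𝕜} {x : 𝕜}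
    (hA : HasDerivAt A A' x) (hB : HasDerivAt B B' x) :
    HasDerivAt (fun t => A t * B t) (A' * B x + A x * B') x := by
  refine hasDerivAt_pi.mpr fun i => hasDerivAt_pi.mpr fun j => ?_
  have hAe : ∀ i k, HasDerivAt (fun t => A t i k) (A' i k) x := fun i k =>
    hasDerivAt_pi.mp (hasDerivAt_pi.mp hA i) k
  have hBe : ∀ k j, HasDerivAt (fun t => B t k j) (B' k j) x := fun k j =>
    hasDerivAt_pi.mp (hasDerivAt_pi.mp hB k) j
  convert HasDerivAt.fun_sum (u := Finset.univ) fun k _ => (hAe i k).fun_mul (hBe k j) using 1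
  · simp only [mul_apply]
  · simp only [Matrix.add_apply, mul_apply, Finset.sum_add_distrib]

section Commutator

variable {𝕜 ι : Type*} [NontriviallyNormedField 𝕜] [CompleteSpace 𝕜] [Fintype ι] [DecidableEq ι]

noncomputable def Matrix.commutatorCLM (S : Matrix ι ι 𝕜) : Matrix ι ι 𝕜 →L[𝕜] Matrix ι ι 𝕜 :=
  LinearMap.toContinuousLinearMap (LinearMap.mulRight 𝕜 S - LinearMap.mulLeft 𝕜 S)

theorem Continuous.matrix_commutatorCLM {X : Type*} [TopologicalSpace X] {S : X → Matrix ι ι 𝕜}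
    (hS : Continuous S) :
    Continuous fun t => commutatorCLM (S t) :=
  continuous_clm_apply.mpr fun Y => by
    change Continuous fun t => Y * S t - S t * Y
    exact (continuous_const.matrix_mul hS).sub (hS.matrix_mul continuous_const)

end Commutator

/-- If `2 J̇ = J S − S J` with `S` continuous and `J₀² = −I`, then `J_t² = −I` for all `t`. -/
theorem stmt_10 {n : ℕ} (S J J' : ℝ → Matrix (Fin n) (Fin n) ℝ)
    (hS : Continuous S) (hJ : ∀ t, HasDerivAt J (J' t) t)
    (hode : ∀ t, (2 : ℝ) • J' t = J t * S t - S t * J t)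
    (h0 : J 0 * J 0 = -1) : ∀ t, J t * J t = -1 := by
  set A : ℝ → Matrix (Fin n) (Fin n) ℝ →L[ℝ] Matrix (Fin n) (Fin n) ℝ :=
    fun t => (2 : ℝ)⁻¹ • commutatorCLM (S t)
  have hA : Continuous A := hS.matrix_commutatorCLM.const_smul (2 : ℝ)⁻¹
  have hsq : ∀ t, HasDerivAt (fun t => J t * J t) (A t (J t * J t)) t := fun t => by
    refine ((hJ t).matrix_mul (hJ t)).congr_deriv ?_
    change J' t * J t + J t * J' t = (2 : ℝ)⁻¹ • (J t * J t * S t - S t * (J t * J t))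
    rw [eq_inv_smul_iff₀ two_ne_zero, smul_add, ← smul_mul_assoc, ← mul_smul_comm, hode]
    noncomm_ring
  have hneg_one : ∀ t, HasDerivAt (fun _ => (-1 : Matrix (Fin n) (Fin n) ℝ)) (A t (-1)) t :=
    fun t => (hasDerivAt_const t _).congr_deriv <| by
      change 0 = (2 : ℝ)⁻¹ • (-1 * S t - S t * -1)
      simp
  exact congrFun (ODE_solution_unique_univ_of_linear hA hsq hneg_one h0)
end

section
/- For symmetric n×n real matrices u, v and symmetric invertible g, the sectional curvature expression σ(u,v) := −(1/4)·Tr{[[U,V],V]·U}, where U := g⁻¹u and V := g⁻¹v, satisfies σ(u,v) = −(1/4)·Tr([U,V]·[U,V]^{T_g}) ≤ 0, where A^{T_g} := g⁻¹Aᵀg denotes the g-transpose. In particular σ(u,v) = 0 if and only if U and V commute. -/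
/-!
Since `g` and `u`, `v` are symmetric, `U` and `V` are self-adjoint for the bilinear form `g`, so
their commutator `C` is `g`-skew-adjoint: `g⁻¹ Cᵀ g = -C`. Cyclicity of the trace turns
`Tr([C,V] U)` into `-Tr(C²) = Tr(C · g⁻¹ Cᵀ g)`. Writing `g = Bᵀ B` with `B` invertible, the
latter is `Tr(D Dᵀ)` for `D = B C B⁻¹`, a sum of squares that vanishes only when `C = 0`.
-/

open Matrix
open scoped MatrixOrder

namespace Matrix

section CommRing

variable {R n : Type*} [CommRing R] [Fintype n]

theorem trace_commutator_mul (C U V : Matrix n n R) :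
    trace ((C * V - V * C) * U) = trace (C * (V * U - U * V)) := by
  rw [sub_mul, trace_sub, mul_sub, trace_sub, mul_assoc, mul_assoc, trace_mul_comm V,
    mul_assoc]

theorem IsSelfAdjoint.isSkewAdjoint_commutator {J A B : Matrix n n R}
    (hA : J.IsSelfAdjoint A) (hB : J.IsSelfAdjoint B) : J.IsSkewAdjoint (A * B - B * A) := by
  unfold Matrix.IsSkewAdjoint Matrix.IsSelfAdjoint Matrix.IsAdjointPair at *
  rw [transpose_sub, transpose_mul, transpose_mul, sub_mul, mul_assoc, mul_assoc, hA, hB,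
    ← mul_assoc, ← mul_assoc, hA, hB]
  noncomm_ring

variable [DecidableEq n]

theorem isSelfAdjoint_inv_mul {J u : Matrix n n R} (hJ : J.IsSymm) (hJdet : IsUnit J.det)
    (hu : u.IsSymm) : J.IsSelfAdjoint (J⁻¹ * u) := by
  rw [Matrix.IsSelfAdjoint, Matrix.IsAdjointPair, transpose_mul, transpose_nonsing_inv, hJ.eq,
    hu.eq, mul_assoc, nonsing_inv_mul _ hJdet, mul_nonsing_inv_cancel_left _ _ hJdet, mul_one]

theorem IsSkewAdjoint.inv_mul_transpose_mul {J C : Matrix n n R} (hC : J.IsSkewAdjoint C)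
    (hJdet : IsUnit J.det) : J⁻¹ * Cᵀ * J = -C := by
  rw [mul_assoc, hC, nonsing_inv_mul_cancel_left _ _ hJdet]

end CommRing

section Real

variable {n : Type*} [Fintype n] [DecidableEq n]

theorem trace_mul_inv_mul_transpose_mul_eq {g B : Matrix n n ℝ} (hg : g = Bᵀ * B)
    (C : Matrix n n ℝ) :
    trace (C * (g⁻¹ * Cᵀ * g)) = trace (B * C * B⁻¹ * (B * C * B⁻¹)ᵀ) := by
  simp only [hg, mul_inv_rev, transpose_mul, transpose_nonsing_inv, mul_assoc]
  rw [trace_mul_comm B]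
  simp only [mul_assoc]

theorem PosDef.exists_isUnit_eq_transpose_mul_self {g : Matrix n n ℝ} (hg : g.PosDef) :
    ∃ B : Matrix n n ℝ, IsUnit B ∧ g = Bᵀ * B := by
  obtain ⟨B, hB, rfl⟩ :=
    CStarAlgebra.isStrictlyPositive_iff_eq_star_mul_self.mp hg.isStrictlyPositive
  exact ⟨B, hB, by rw [star_eq_conjTranspose, conjTranspose_eq_transpose_of_trivial]⟩

theorem PosDef.trace_mul_inv_mul_transpose_mul_nonneg {g : Matrix n n ℝ} (hg : g.PosDef)
    (C : Matrix n n ℝ) : 0 ≤ trace (C * (g⁻¹ * Cᵀ * g)) := by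
  obtain ⟨B, -, hgB⟩ := hg.exists_isUnit_eq_transpose_mul_self
  rw [trace_mul_inv_mul_transpose_mul_eq hgB, ← conjTranspose_eq_transpose_of_trivial]
  exact (posSemidef_self_mul_conjTranspose _).trace_nonneg

theorem PosDef.trace_mul_inv_mul_transpose_mul_eq_zero_iff {g : Matrix n n ℝ} (hg : g.PosDef)
    {C : Matrix n n ℝ} : trace (C * (g⁻¹ * Cᵀ * g)) = 0 ↔ C = 0 := by
  obtain ⟨B, hB, hgB⟩ := hg.exists_isUnit_eq_transpose_mul_self
  rw [trace_mul_inv_mul_transpose_mul_eq hgB, ← conjTranspose_eq_transpose_of_trivial,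
    trace_mul_conjTranspose_self_eq_zero_iff, (isUnit_nonsing_inv_iff.mpr hB).mul_left_eq_zero,
    hB.mul_right_eq_zero]

end Real

end Matrix

/-- Non-positivity of the sectional curvature of the L² metric:
for `U := g⁻¹u`, `V := g⁻¹v` with `g` positive definite and `u`, `v` symmetric,
`σ(u,v) = −(1/4)Tr([[U,V],V]U) = −(1/4)Tr([U,V]·[U,V]^{T_g}) ≤ 0`, with equality
iff `U` and `V` commute. -/
theorem stmt_19 {n : ℕ} (g u v : Matrix (Fin n) (Fin n) ℝ) (hg : g.PosDef)
    (hu : u.IsSymm) (hv : v.IsSymm)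
    (U V : Matrix (Fin n) (Fin n) ℝ) (hU : U = g⁻¹ * u) (hV : V = g⁻¹ * v) :
    (-(1 / 4 : ℝ)) * Matrix.trace (((U * V - V * U) * V - V * (U * V - V * U)) * U)
        = (-(1 / 4 : ℝ)) * Matrix.trace ((U * V - V * U) * (g⁻¹ * (U * V - V * U)ᵀ * g)) ∧
    (-(1 / 4 : ℝ)) * Matrix.trace (((U * V - V * U) * V - V * (U * V - V * U)) * U) ≤ 0 ∧
    ((-(1 / 4 : ℝ)) * Matrix.trace (((U * V - V * U) * V - V * (U * V - V * U)) * U) = 0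
      ↔ U * V = V * U) := by
  have hgdet : IsUnit g.det := isUnit_iff_ne_zero.mpr hg.det_pos.ne'
  have hgS : g.IsSymm := hg.isHermitian
  have hC : g.IsSkewAdjoint (U * V - V * U) := by
    subst hU hV
    exact (isSelfAdjoint_inv_mul hgS hgdet hu).isSkewAdjoint_commutator
      (isSelfAdjoint_inv_mul hgS hgdet hv)
  have hσ : trace (((U * V - V * U) * V - V * (U * V - V * U)) * U)
      = trace ((U * V - V * U) * (g⁻¹ * (U * V - V * U)ᵀ * g)) := by
    rw [trace_commutator_mul, hC.inv_mul_transpose_mul hgdet, neg_sub]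
  rw [hσ, mul_eq_zero, hg.trace_mul_inv_mul_transpose_mul_eq_zero_iff, sub_eq_zero]
  refine ⟨rfl, ?_, by norm_num⟩
  linarith [hg.trace_mul_inv_mul_transpose_mul_nonneg (U * V - V * U)]
end
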